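/- arXiv:2105.04770 — 4 statements merged into one kernel-verified Lean document; each statement's English description precedes it below -/
import Mathlib

section
/- The symmetric case of the GCH-divergence is maximized at t = 1/2 and reduces to a squared Hellinger-type distance: let ι be a nonempty finite index set, a, b : ι → (0,∞), and σ : ι → ι an involution (σ ∘ σ = id) such that a(σ(x)) = b(x) for all x ∈ ι. Define f(t) := Σ_{x∈ι} [t·a(x) + (1−t)·b(x) − a(x)^t·b(x)^{1−t}] for t ∈ [0,1]. Then sup_{t∈[0,1]} f(t) = f(1/2) = (1/2)·Σ_{x∈ι} (√(a(x)) − √(b(x)))². -/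
open scoped BigOperators

/-- **Symmetric case of the GCH-divergence**: if `σ` is an involution with
`a ∘ σ = b`, then `f(t) = ∑_x [t a x + (1-t) b x - (a x)^t (b x)^(1-t)]` attains its
supremum over `[0,1]` at `t = 1/2`, where it equals
`(1/2) ∑_x (√(a x) - √(b x))²`. -/
theorem gch_symmetric_case {ι : Type*} [Fintype ι] [Nonempty ι]
    (a b : ι → ℝ) (ha : ∀ x, 0 < a x) (hb : ∀ x, 0 < b x)
    (σ : ι → ι) (hσ : ∀ x, σ (σ x) = x) (hab : ∀ x, a (σ x) = b x) :
    (⨆ t : Set.Icc (0 : ℝ) 1,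
        ∑ x, ((t : ℝ) * a x + (1 - (t : ℝ)) * b x
          - a x ^ (t : ℝ) * b x ^ (1 - (t : ℝ)))) =
      (∑ x, ((1 / 2 : ℝ) * a x + (1 - (1 / 2 : ℝ)) * b x
        - a x ^ ((1 : ℝ) / 2) * b x ^ (1 - (1 : ℝ) / 2))) ∧
    (∑ x, ((1 / 2 : ℝ) * a x + (1 - (1 / 2 : ℝ)) * b x
        - a x ^ ((1 : ℝ) / 2) * b x ^ (1 - (1 : ℝ) / 2))) =
      (1 / 2) * ∑ x, (Real.sqrt (a x) - Real.sqrt (b x)) ^ 2 := by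
  have hba : ∀ x, b (σ x) = a x := fun x => by rw [← hab, hσ]
  have hhalf : ∀ x, a x ^ ((1:ℝ)/2) * b x ^ (1 - (1:ℝ)/2)
      = Real.sqrt (a x) * Real.sqrt (b x) := by
    intro x
    rw [Real.sqrt_eq_rpow, Real.sqrt_eq_rpow]
    norm_num
  -- per-term AM-GM
  have amgm : ∀ (t : ℝ) (x : ι),
      2 * (a x ^ ((1:ℝ)/2) * b x ^ (1 - (1:ℝ)/2))
        ≤ a x ^ t * b x ^ (1 - t) + a x ^ (1 - t) * b x ^ t := by
    intro t x
    set u := a x ^ t * b x ^ (1 - t) with hu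
    set v := a x ^ (1 - t) * b x ^ t with hv
    have hupos : 0 < u := mul_pos (Real.rpow_pos_of_pos (ha x) _) (Real.rpow_pos_of_pos (hb x) _)
    have hvpos : 0 < v := mul_pos (Real.rpow_pos_of_pos (ha x) _) (Real.rpow_pos_of_pos (hb x) _)
    have huv : u * v = a x * b x := by
      rw [hu, hv]
      rw [show a x ^ t * b x ^ (1 - t) * (a x ^ (1 - t) * b x ^ t)
          = (a x ^ t * a x ^ (1 - t)) * (b x ^ (1 - t) * b x ^ t) by ring,
        ← Real.rpow_add (ha x), ← Real.rpow_add (hb x)]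
      norm_num
    have hsq : Real.sqrt u * Real.sqrt v = Real.sqrt (a x) * Real.sqrt (b x) := by
      rw [← Real.sqrt_mul hupos.le, huv, Real.sqrt_mul (ha x).le]
    rw [hhalf, ← hsq]
    nlinarith [sq_nonneg (Real.sqrt u - Real.sqrt v), Real.sq_sqrt hupos.le,
      Real.sq_sqrt hvpos.le]
  -- symmetry of the sum
  have hsym : ∀ t : ℝ,
      (∑ x, (t * a x + (1 - t) * b x - a x ^ t * b x ^ (1 - t)))
        = ∑ x, (t * b x + (1 - t) * a x - b x ^ t * a x ^ (1 - t)) := by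
    intro t
    rw [← Equiv.sum_comp (Equiv.ofBijective σ (Function.Involutive.bijective hσ))]
    simp only [Equiv.ofBijective_apply, hab, hba]
  have hbound : ∀ t : Set.Icc (0:ℝ) 1,
      (∑ x, ((t : ℝ) * a x + (1 - (t : ℝ)) * b x - a x ^ (t : ℝ) * b x ^ (1 - (t : ℝ))))
        ≤ ∑ x, ((1 / 2 : ℝ) * a x + (1 - (1 / 2 : ℝ)) * b x
            - a x ^ ((1 : ℝ) / 2) * b x ^ (1 - (1 : ℝ) / 2)) := by
    rintro ⟨t, ht⟩
    simp only []
    have key : ∀ x : ι,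
        (t * a x + (1 - t) * b x - a x ^ t * b x ^ (1 - t))
          + (t * b x + (1 - t) * a x - b x ^ t * a x ^ (1 - t))
          ≤ 2 * ((1 / 2 : ℝ) * a x + (1 - (1 / 2 : ℝ)) * b x
            - a x ^ ((1 : ℝ) / 2) * b x ^ (1 - (1 : ℝ) / 2)) := by
      intro x
      have := amgm t x
      nlinarith [this]
    have hsum := Finset.sum_le_sum (s := Finset.univ) (fun x _ => key x)
    rw [Finset.sum_add_distrib, ← Finset.mul_sum] at hsum
    have h2 := hsym t
    linarith [hsum, h2]
  have hC : ∀ x : ι, True := fun _ => trivial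
  constructor
  · haveI : Nonempty (Set.Icc (0:ℝ) 1) := ⟨⟨0, by norm_num⟩⟩
    apply le_antisymm
    · exact ciSup_le hbound
    · have := le_ciSup (f := fun t : Set.Icc (0:ℝ) 1 =>
        ∑ x, ((t : ℝ) * a x + (1 - (t : ℝ)) * b x - a x ^ (t : ℝ) * b x ^ (1 - (t : ℝ))))
        ⟨_, Set.forall_mem_range.mpr hbound⟩ ⟨1/2, by norm_num⟩
      simpa using this
  · rw [Finset.mul_sum]
    apply Finset.sum_congr rfl
    intro x _
    rw [hhalf]
    nlinarith [Real.sq_sqrt (ha x).le, Real.sq_sqrt (hb x).le,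
      Real.sqrt_nonneg (a x), Real.sqrt_nonneg (b x)]
end

section
/- Frobenius error of a best rank-k approximation against a rank-k target: let L, M be n×n real matrices with rank(M) ≤ k, and let L_k be any n×n real matrix of rank at most k that minimizes X ↦ ‖L − X‖_op over all matrices X of rank at most k (a best rank-k approximation of L in operator norm). Then ‖L_k − M‖_F² ≤ 8k·‖L − M‖_op². -/
open scoped BigOperators

noncomputable section

/-- The operator norm of a real matrix induced by the Euclidean norms:
the supremum of `‖X v‖₂` over Euclidean unit vectors `v`. -/
def opNorm {m n : ℕ} (X : Matrix (Fin m) (Fin n) ℝ) : ℝ :=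
  sSup { r : ℝ | ∃ v : Fin n → ℝ, (∑ j, v j ^ 2) = 1 ∧
    r = Real.sqrt (∑ i, (X.mulVec v i) ^ 2) }

/-!
Put `D = Lk - M`. Then `rank D ≤ 2k`, and since `Lk` is at least as close to `L` as `M` is,
`‖D‖_op ≤ ‖L - M‖_op + ‖L - Lk‖_op ≤ 2 ‖L - M‖_op`. Finally `‖D‖_F² = tr (Dᵀ D)` is the sum of
the `rank D` nonzero eigenvalues of `Dᵀ D`, each of which is at most `‖Dᵀ D‖_op = ‖D‖_op²`.
-/

open Finset
open scoped Matrix.Norms.L2Operator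

namespace Matrix

theorem rank_sub_le {K m n : Type*} [Field K] [Fintype m] [Fintype n] (A B : Matrix m n K) :
    (A - B).rank ≤ A.rank + B.rank := by
  have hrange : LinearMap.range (A - B).mulVecLin ≤
      LinearMap.range A.mulVecLin ⊔ LinearMap.range B.mulVecLin := by
    rintro - ⟨v, rfl⟩
    rw [mulVecLin_apply, sub_mulVec]
    exact sub_mem (Submodule.mem_sup_left ⟨v, rfl⟩) (Submodule.mem_sup_right ⟨v, rfl⟩)
  exact (Submodule.finrank_mono hrange).trans (Submodule.finrank_add_le_finrank_add_finrank _ _)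

variable {m n : Type*} [Fintype m] [Fintype n]

theorem sum_sq_eq_trace_transpose_mul_self (A : Matrix m n ℝ) :
    ∑ i, ∑ j, A i j ^ 2 = (Aᵀ * A).trace := by
  simp only [trace, diag, mul_apply, transpose_apply, sq]
  exact Finset.sum_comm

theorem eigenvalues_conjTranspose_mul_self_le_sq_l2_opNorm [DecidableEq n] (A : Matrix m n ℝ)
    (i : n) : (isHermitian_conjTranspose_mul_self A).eigenvalues i ≤ ‖A‖ ^ 2 := by
  have : Nonempty n := ⟨i⟩
  calc (isHermitian_conjTranspose_mul_self A).eigenvalues i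
      ≤ ‖(isHermitian_conjTranspose_mul_self A).eigenvalues i‖ := Real.le_norm_self _
    _ ≤ ‖Aᴴ * A‖ := spectrum.norm_le_norm_of_mem
        ((isHermitian_conjTranspose_mul_self A).eigenvalues_mem_spectrum_real i)
    _ = ‖A‖ ^ 2 := by rw [l2_opNorm_conjTranspose_mul_self, sq]

theorem sum_sq_le_rank_mul_sq_l2_opNorm [DecidableEq n] (A : Matrix m n ℝ) :
    ∑ i, ∑ j, A i j ^ 2 ≤ A.rank * ‖A‖ ^ 2 := by
  have hH := isHermitian_conjTranspose_mul_self A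
  calc ∑ i, ∑ j, A i j ^ 2 = ∑ j, hH.eigenvalues j := by
        simpa [sum_sq_eq_trace_transpose_mul_self] using hH.trace_eq_sum_eigenvalues
    _ = ∑ j with hH.eigenvalues j ≠ 0, hH.eigenvalues j := (sum_filter_ne_zero _).symm
    _ ≤ #{j | hH.eigenvalues j ≠ 0} • ‖A‖ ^ 2 :=
        sum_le_card_nsmul _ _ _ fun j _ => eigenvalues_conjTranspose_mul_self_le_sq_l2_opNorm A j
    _ = A.rank * ‖A‖ ^ 2 := by
        rw [nsmul_eq_mul, ← Fintype.card_subtype, ← hH.rank_eq_card_non_zero_eigs,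
          rank_conjTranspose_mul_self]

end Matrix

theorem opNorm_eq_l2_opNorm {m n : ℕ} (X : Matrix (Fin m) (Fin n) ℝ) : opNorm X = ‖X‖ := by
  rw [Matrix.l2_opNorm_def, ← ContinuousLinearMap.sSup_sphere_eq_norm]
  refine congrArg sSup (Set.ext fun r => ⟨?_, ?_⟩)
  · rintro ⟨v, hv, rfl⟩
    refine ⟨WithLp.toLp 2 v, ?_, ?_⟩ <;> simp [EuclideanSpace.norm_eq, hv]
  · rintro ⟨x, hx, rfl⟩
    refine ⟨x.ofLp, ?_, ?_⟩ <;> simp_all [EuclideanSpace.norm_eq]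

/-- **Frobenius error of a best rank-`k` approximation against a rank-`k` target**:
if `rank M ≤ k` and `Lk` minimizes `X ↦ ‖L - X‖_op` over matrices of rank at most `k`,
then `‖Lk - M‖_F² ≤ 8 k ‖L - M‖_op²`. -/
theorem best_rank_k_approx_frobenius_bound
    {n k : ℕ} (L M Lk : Matrix (Fin n) (Fin n) ℝ)
    (hM : M.rank ≤ k) (hLk : Lk.rank ≤ k)
    (hmin : ∀ X : Matrix (Fin n) (Fin n) ℝ, X.rank ≤ k →
      opNorm (L - Lk) ≤ opNorm (L - X)) :
    (∑ i, ∑ j, (Lk - M) i j ^ 2) ≤ 8 * (k : ℝ) * opNorm (L - M) ^ 2 := by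
  simp only [opNorm_eq_l2_opNorm] at hmin ⊢
  have hrank : ((Lk - M).rank : ℝ) ≤ 2 * k := by
    exact_mod_cast (Matrix.rank_sub_le Lk M).trans (by omega)
  have hnorm : ‖Lk - M‖ ≤ 2 * ‖L - M‖ :=
    calc ‖Lk - M‖ = ‖(L - M) - (L - Lk)‖ := by rw [sub_sub_sub_cancel_left]
      _ ≤ ‖L - M‖ + ‖L - Lk‖ := norm_sub_le _ _
      _ ≤ 2 * ‖L - M‖ := by linarith [hmin M hM]
  calc ∑ i, ∑ j, (Lk - M) i j ^ 2 ≤ (Lk - M).rank * ‖Lk - M‖ ^ 2 :=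
        Matrix.sum_sq_le_rank_mul_sq_l2_opNorm _
    _ ≤ (2 * k) * (2 * ‖L - M‖) ^ 2 := by gcongr
    _ = 8 * k * ‖L - M‖ ^ 2 := by ring

end
end

section
/- Exponential form of the Chernoff affinity bound for product Bernoulli measures: let A be a finite set and p, q : A → (0,1). For x ∈ {0,1}^A let P(x) := ∏_{a∈A} p(a)^{x_a}(1 − p(a))^{1−x_a} and Q(x) := ∏_{a∈A} q(a)^{x_a}(1 − q(a))^{1−x_a}. Then for every t ∈ [0,1], Σ_{x∈{0,1}^A} min(P(x), Q(x)) ≤ exp(− Σ_{a∈A} [t·p(a) + (1−t)·q(a) − p(a)^t·q(a)^{1−t}]). -/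
open scoped BigOperators Classical

/-- **Exponential form of the Chernoff affinity bound for product Bernoulli
measures**: for any `t ∈ [0,1]`,
`∑_x min(P(x), Q(x)) ≤ exp(-∑_a [t p(a) + (1-t) q(a) - p(a)^t q(a)^{1-t}])`. -/
theorem chernoff_affinity_exponential_form
    {A : Type*} [Fintype A] [DecidableEq A]
    (p q : A → ℝ)
    (hp : ∀ a, p a ∈ Set.Ioo (0 : ℝ) 1) (hq : ∀ a, q a ∈ Set.Ioo (0 : ℝ) 1)
    (t : ℝ) (ht : t ∈ Set.Icc (0 : ℝ) 1) :
    (∑ x : A → Bool,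
        min (∏ a, if x a then p a else 1 - p a) (∏ a, if x a then q a else 1 - q a))
      ≤ Real.exp (-∑ a, (t * p a + (1 - t) * q a - p a ^ t * q a ^ (1 - t))) := by
  obtain ⟨ht0, ht1⟩ := ht
  have ht1' : 0 ≤ 1 - t := by linarith
  set g : A → Bool → ℝ := fun a b =>
    (if b then p a else 1 - p a) ^ t * (if b then q a else 1 - q a) ^ (1 - t) with hg
  have hPpos : ∀ a (b : Bool), (0:ℝ) < (if b then p a else 1 - p a) := by
    intro a b; rcases (hp a) with ⟨h1, h2⟩; cases b <;> simp <;> linarith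
  have hQpos : ∀ a (b : Bool), (0:ℝ) < (if b then q a else 1 - q a) := by
    intro a b; rcases (hq a) with ⟨h1, h2⟩; cases b <;> simp <;> linarith
  have hkey : ∀ x : A → Bool,
      min (∏ a, if x a then p a else 1 - p a) (∏ a, if x a then q a else 1 - q a)
        ≤ ∏ a, g a (x a) := by
    intro x
    set u : ℝ := ∏ a, if x a then p a else 1 - p a with hu
    set v : ℝ := ∏ a, if x a then q a else 1 - q a with hv
    have hupos : 0 < u := Finset.prod_pos fun a _ => hPpos a (x a)
    have hvpos : 0 < v := Finset.prod_pos fun a _ => hQpos a (x a)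
    have hminpos : 0 < min u v := lt_min hupos hvpos
    have h1 : min u v ≤ u ^ t * v ^ (1 - t) := by
      calc min u v = (min u v) ^ t * (min u v) ^ (1 - t) := by
            rw [← Real.rpow_add hminpos, add_sub_cancel, Real.rpow_one]
        _ ≤ u ^ t * v ^ (1 - t) := by
            apply mul_le_mul
            · exact Real.rpow_le_rpow hminpos.le (min_le_left u v) ht0
            · exact Real.rpow_le_rpow hminpos.le (min_le_right u v) ht1'
            · exact Real.rpow_nonneg hminpos.le _
            · exact Real.rpow_nonneg hupos.le _
    refine h1.trans_eq ?_
    rw [hu, hv, ← Real.finset_prod_rpow _ _ (fun a _ => (hPpos a (x a)).le),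
      ← Real.finset_prod_rpow _ _ (fun a _ => (hQpos a (x a)).le),
      ← Finset.prod_mul_distrib]
  have hstep : (∑ x : A → Bool,
        min (∏ a, if x a then p a else 1 - p a) (∏ a, if x a then q a else 1 - q a))
      ≤ ∑ x : A → Bool, ∏ a, g a (x a) :=
    Finset.sum_le_sum fun x _ => hkey x
  refine hstep.trans ?_
  rw [← Fintype.prod_sum (fun a b => g a b), ← Finset.sum_neg_distrib, Real.exp_sum]
  apply Finset.prod_le_prod
  · intro a _
    apply Finset.sum_nonneg
    intro b _
    exact mul_nonneg (Real.rpow_nonneg (hPpos a b).le _) (Real.rpow_nonneg (hQpos a b).le _)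
  · intro a _
    rcases hp a with ⟨hp1, hp2⟩
    rcases hq a with ⟨hq1, hq2⟩
    have hgm : (1 - p a) ^ t * (1 - q a) ^ (1 - t) ≤ t * (1 - p a) + (1 - t) * (1 - q a) :=
      Real.geom_mean_le_arith_mean2_weighted ht0 ht1' (by linarith) (by linarith)
        (by ring)
    have hsum : ∑ b : Bool, g a b = (1 - p a) ^ t * (1 - q a) ^ (1 - t)
        + p a ^ t * q a ^ (1 - t) := by
      simp [hg, Fintype.sum_bool]; ring
    rw [hsum]
    have hexp := Real.add_one_le_exp (-(t * p a + (1 - t) * q a - p a ^ t * q a ^ (1 - t)))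
    nlinarith [hexp, hgm]
end

section
/- Grouped affinity bound underlying the GCH-divergence error exponent (finite-n core of Lemma 8): let M be a finite set, D : M → ℕ, α, β : M → (0,∞), and δ > 0 with α(m)·δ < 1 and β(m)·δ < 1 for all m ∈ M. Let A be a finite set partitioned into classes (A_m)_{m∈M} with |A_m| = D(m), and let P and Q be the probability mass functions on {0,1}^A of independent Bernoulli coordinates where each coordinate in class A_m has success probability α(m)·δ under P and β(m)·δ under Q. Then for every t ∈ [0,1], Σ_{x∈{0,1}^A} min(P(x), Q(x)) ≤ exp(− δ · Σ_{m∈M} D(m)·[t·α(m) + (1−t)·β(m) − α(m)^t·β(m)^{1−t}]). -/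
open scoped BigOperators Classical

private lemma min_le_geom_mean {u v t : ℝ} (hu : 0 ≤ u) (hv : 0 ≤ v)
    (h0 : 0 ≤ t) (h1 : t ≤ 1) : min u v ≤ u ^ t * v ^ (1 - t) := by
  rcases eq_or_lt_of_le (le_min hu hv) with h | h
  · rw [← h]
    positivity
  · calc min u v = min u v ^ t * min u v ^ (1 - t) := by
          rw [← Real.rpow_add h, add_sub_cancel, Real.rpow_one]
        _ ≤ u ^ t * v ^ (1 - t) := by
          apply mul_le_mul
          · exact Real.rpow_le_rpow h.le (min_le_left _ _) h0
          · exact Real.rpow_le_rpow h.le (min_le_right _ _) (by linarith)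
          · positivity
          · positivity

/-- **Grouped affinity bound underlying the GCH-divergence error exponent**: the finite
set `A` is partitioned into classes via `cls : A → M` with fibers of sizes `D m`; each
coordinate of class `m` is Bernoulli with parameter `α m · δ` under `P` and `β m · δ`
under `Q`. Then for every `t ∈ [0,1]`,
`∑_x min(P(x), Q(x)) ≤ exp(-δ ∑_m D m [t α m + (1-t) β m - (α m)^t (β m)^{1-t}])`. -/
theorem grouped_chernoff_affinity_bound
    {M A : Type*} [Fintype M] [DecidableEq M] [Fintype A] [DecidableEq A]
    (D : M → ℕ) (α β : M → ℝ)
    (hα : ∀ m, 0 < α m) (hβ : ∀ m, 0 < β m)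
    (δ : ℝ) (hδ : 0 < δ)
    (hαδ : ∀ m, α m * δ < 1) (hβδ : ∀ m, β m * δ < 1)
    (cls : A → M) (hcard : ∀ m, (Finset.univ.filter fun a => cls a = m).card = D m)
    (t : ℝ) (ht : t ∈ Set.Icc (0 : ℝ) 1) :
    (∑ x : A → Bool,
        min (∏ a, if x a then α (cls a) * δ else 1 - α (cls a) * δ)
          (∏ a, if x a then β (cls a) * δ else 1 - β (cls a) * δ))
      ≤ Real.exp (-(δ * ∑ m, (D m : ℝ) *
          (t * α m + (1 - t) * β m - α m ^ t * β m ^ (1 - t)))) := by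
  obtain ⟨h0, h1⟩ := ht
  set g : M → ℝ := fun m => t * α m + (1 - t) * β m - α m ^ t * β m ^ (1 - t) with hg
  -- positivity facts
  have hαδ0 : ∀ m, 0 < α m * δ := fun m => mul_pos (hα m) hδ
  have hβδ0 : ∀ m, 0 < β m * δ := fun m => mul_pos (hβ m) hδ
  have hp : ∀ a (b : Bool), 0 ≤ (if b then α (cls a) * δ else 1 - α (cls a) * δ) := by
    intro a b; cases b <;> simp <;> [linarith [hαδ (cls a)]; exact (hαδ0 (cls a)).le]
  have hq : ∀ a (b : Bool), 0 ≤ (if b then β (cls a) * δ else 1 - β (cls a) * δ) := by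
    intro a b; cases b <;> simp <;> [linarith [hβδ (cls a)]; exact (hβδ0 (cls a)).le]
  -- Step 1: min P Q ≤ ∏ p^t q^(1-t)
  have step1 : ∀ x : A → Bool,
      min (∏ a, if x a then α (cls a) * δ else 1 - α (cls a) * δ)
          (∏ a, if x a then β (cls a) * δ else 1 - β (cls a) * δ)
      ≤ ∏ a, ((if x a then α (cls a) * δ else 1 - α (cls a) * δ) ^ t *
              (if x a then β (cls a) * δ else 1 - β (cls a) * δ) ^ (1 - t)) := by
    intro x
    have := min_le_geom_mean
      (u := ∏ a, if x a then α (cls a) * δ else 1 - α (cls a) * δ)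
      (v := ∏ a, if x a then β (cls a) * δ else 1 - β (cls a) * δ)
      (Finset.prod_nonneg fun a _ => hp a (x a))
      (Finset.prod_nonneg fun a _ => hq a (x a)) h0 h1
    refine this.trans_eq ?_
    rw [← Real.finset_prod_rpow _ _ (fun a _ => hp a (x a)),
        ← Real.finset_prod_rpow _ _ (fun a _ => hq a (x a)), ← Finset.prod_mul_distrib]
  -- Step 2: sum-product swap
  have step2 :
      (∑ x : A → Bool, ∏ a, ((if x a then α (cls a) * δ else 1 - α (cls a) * δ) ^ t *
          (if x a then β (cls a) * δ else 1 - β (cls a) * δ) ^ (1 - t)))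
      = ∏ a, ((α (cls a) * δ) ^ t * (β (cls a) * δ) ^ (1 - t) +
          (1 - α (cls a) * δ) ^ t * (1 - β (cls a) * δ) ^ (1 - t)) := by
    rw [← Fintype.prod_sum (fun (a : A) (b : Bool) =>
      (if b then α (cls a) * δ else 1 - α (cls a) * δ) ^ t *
      (if b then β (cls a) * δ else 1 - β (cls a) * δ) ^ (1 - t))]
    exact Finset.prod_congr rfl fun a _ => by rw [Fintype.sum_bool]; simp
  -- Step 3: per-factor bound
  have step3 : ∀ m, (α m * δ) ^ t * (β m * δ) ^ (1 - t) +
      (1 - α m * δ) ^ t * (1 - β m * δ) ^ (1 - t) ≤ Real.exp (-(δ * g m)) := by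
    intro m
    have e1 : (α m * δ) ^ t * (β m * δ) ^ (1 - t) = δ * (α m ^ t * β m ^ (1 - t)) := by
      rw [Real.mul_rpow (hα m).le hδ.le, Real.mul_rpow (hβ m).le hδ.le]
      rw [show α m ^ t * δ ^ t * (β m ^ (1 - t) * δ ^ (1 - t))
          = (δ ^ t * δ ^ (1 - t)) * (α m ^ t * β m ^ (1 - t)) by ring,
        ← Real.rpow_add hδ, add_sub_cancel, Real.rpow_one]
    have e2 : (1 - α m * δ) ^ t * (1 - β m * δ) ^ (1 - t)
        ≤ t * (1 - α m * δ) + (1 - t) * (1 - β m * δ) :=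
      Real.geom_mean_le_arith_mean2_weighted h0 (by linarith)
        (by linarith [hαδ m]) (by linarith [hβδ m]) (by ring)
    have e3 : -(δ * g m) + 1 ≤ Real.exp (-(δ * g m)) := Real.add_one_le_exp _
    have : (α m * δ) ^ t * (β m * δ) ^ (1 - t) +
        (1 - α m * δ) ^ t * (1 - β m * δ) ^ (1 - t) ≤ -(δ * g m) + 1 := by
      rw [e1, show g m = t * α m + (1 - t) * β m - α m ^ t * β m ^ (1 - t) from rfl]
      nlinarith [e2]
    linarith
  -- Step 4: combine
  calc (∑ x : A → Bool,
        min (∏ a, if x a then α (cls a) * δ else 1 - α (cls a) * δ)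
          (∏ a, if x a then β (cls a) * δ else 1 - β (cls a) * δ))
      ≤ ∑ x : A → Bool, ∏ a, ((if x a then α (cls a) * δ else 1 - α (cls a) * δ) ^ t *
          (if x a then β (cls a) * δ else 1 - β (cls a) * δ) ^ (1 - t)) :=
        Finset.sum_le_sum fun x _ => step1 x
    _ = ∏ a, ((α (cls a) * δ) ^ t * (β (cls a) * δ) ^ (1 - t) +
          (1 - α (cls a) * δ) ^ t * (1 - β (cls a) * δ) ^ (1 - t)) := step2
    _ ≤ ∏ a, Real.exp (-(δ * g (cls a))) := by
        apply Finset.prod_le_prod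
        · intro a _
          have h1' : (0:ℝ) ≤ (α (cls a) * δ) ^ t * (β (cls a) * δ) ^ (1 - t) :=
            mul_nonneg (Real.rpow_nonneg (hαδ0 (cls a)).le _)
              (Real.rpow_nonneg (hβδ0 (cls a)).le _)
          have h2' : (0:ℝ) ≤ (1 - α (cls a) * δ) ^ t * (1 - β (cls a) * δ) ^ (1 - t) :=
            mul_nonneg (Real.rpow_nonneg (by linarith [hαδ (cls a)]) _)
              (Real.rpow_nonneg (by linarith [hβδ (cls a)]) _)
          linarith
        · exact fun a _ => step3 (cls a)
    _ = Real.exp (∑ a, -(δ * g (cls a))) := by rw [Real.exp_sum]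
    _ = Real.exp (-(δ * ∑ m, (D m : ℝ) * g m)) := by
        congr 1
        have key : ∑ a, g (cls a) = ∑ m, (D m : ℝ) * g m := by
          rw [← Finset.sum_fiberwise Finset.univ cls (fun a => g (cls a))]
          refine Finset.sum_congr rfl fun m _ => ?_
          rw [Finset.sum_congr rfl (fun a ha => by
              rw [(Finset.mem_filter.mp ha).2]),
            Finset.sum_const, hcard, nsmul_eq_mul]
        rw [← key, Finset.mul_sum, ← Finset.sum_neg_distrib]
end
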